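/- arXiv:2212.09706 — 3 statements merged into one kernel-verified Lean document; each statement's English description precedes it below -/
import Mathlib

section
/- If the random vector (P_1,...,P_K) of standard uniform random variables is weakly negatively dependent, then P(S_K(P) ≤ α) ≤ 3.4·α for all α ∈ (0,1). -/
open MeasureTheory


/-- The Simes function applied to the values `p i`, `i ∈ A`:
`min over k of (|A|/k) · (k-th smallest value)`. -/
noncomputable def simesOn {ι : Type*} (A : Finset ι) (p : ι → ℝ) : ℝ :=
  if h : A.Nonempty then
    ((Finset.range A.card).image fun j =>
      (A.card : ℝ) / (j + 1) * ((A.val.map p).sort (· ≤ ·)).getD j 0).min'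
      ((Finset.nonempty_range_iff.mpr (Finset.card_ne_zero.mpr h)).image _)
  else 0

/-! If `S_K(P) ≤ α`, then for some `m` the `m`-th smallest p-value is at most `mα/K`, so some `m`
of the `P_k` lie below `mα/K`. A union bound over the `C(K, m)` index sets of size `m`, together
with weak negative dependence and uniformity, bounds the probability by
`∑ₘ C(K, m) (mα/K)^m ≤ ∑ₘ (mα)^m / m!`. Evaluating the terms `m ≤ 3` exactly and the rest by
Stirling's `m^m / m! ≤ e^m / √(2πm)` and a geometric series gives at most `3.4 α` when
`α ≤ 5/17`; for larger `α` the bound `3.4 α` exceeds one. -/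

open Finset
open scoped ENNReal

theorem List.Pairwise.succ_le_countP_le_getElem {α : Type*} [LinearOrder α] {L : List α}
    (hL : L.Pairwise (· ≤ ·)) {j : ℕ} (hj : j < L.length) :
    j + 1 ≤ L.countP (· ≤ L[j]) := by
  have htake : (L.take (j + 1)).countP (· ≤ L[j]) = j + 1 := by
    rw [List.countP_eq_length.mpr, List.length_take_of_le hj]
    intro a ha
    obtain ⟨i, hi, rfl⟩ := List.mem_take_iff_getElem.mp ha
    simpa using hL.rel_get_of_le (a := ⟨i, by omega⟩) (b := ⟨j, hj⟩) (Fin.mk_le_mk.mpr (by omega))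
  exact htake ▸ (L.take_sublist _).countP_le

theorem Finset.succ_le_card_filter_le_sort_getElem {ι : Type*} (A : Finset ι) (p : ι → ℝ)
    {j : ℕ} (hj : j < ((A.val.map p).sort (· ≤ ·)).length) :
    j + 1 ≤ #{i ∈ A | p i ≤ ((A.val.map p).sort (· ≤ ·))[j]} := by
  set L := (A.val.map p).sort (· ≤ ·)
  have hcount : #{i ∈ A | p i ≤ L[j]} = L.countP (· ≤ L[j]) := by
    rw [← Multiset.coe_countP, Multiset.sort_eq, Multiset.countP_map]
    rfl
  exact hcount ▸ (Multiset.pairwise_sort _ _).succ_le_countP_le_getElem hj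

theorem exists_card_eq_forall_le_of_simesOn_le {ι : Type*} {A : Finset ι} (hA : A.Nonempty)
    {p : ι → ℝ} {α : ℝ} (h : simesOn A p ≤ α) :
    ∃ m ∈ Icc 1 #A, ∃ B ⊆ A, #B = m ∧ ∀ i ∈ B, p i ≤ m * α / #A := by
  rw [simesOn, dif_pos hA] at h
  set L := (A.val.map p).sort (· ≤ ·)
  obtain ⟨j, hj, hjα⟩ := mem_image.mp
    (min'_mem (image (fun j : ℕ => (#A : ℝ) / (j + 1) * L.getD j 0) (range #A)) _)
  rw [← hjα] at h
  have hjL : j < L.length := by simpa [L] using hj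
  obtain ⟨B, hBA, hB⟩ := exists_subset_card_eq (succ_le_card_filter_le_sort_getElem A p hjL)
  have hA0 : (0 : ℝ) < #A := by exact_mod_cast hA.card_pos
  have hLj : L[j] ≤ (j + 1 : ℕ) * α / #A := by
    rw [List.getD_eq_getElem _ _ hjL, div_mul_eq_mul_div, div_le_iff₀ (by positivity)] at h
    rw [le_div_iff₀ hA0]
    push_cast
    linarith
  refine ⟨j + 1, mem_Icc.mpr ⟨j.succ_pos, mem_range.mp hj⟩, B,
    fun i hi => (mem_filter.mp (hBA hi)).1, hB, fun i hi => (mem_filter.mp (hBA hi)).2.trans hLj⟩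

section RealBounds

open Nat Real

theorem choose_mul_pow_le_pow_div_factorial (n m : ℕ) {α : ℝ} (hα : 0 ≤ α) :
    n.choose m * (m * α / n) ^ m ≤ (m * α) ^ m / m ! := by
  rcases Nat.eq_zero_or_pos n with rfl | hn
  · rcases Nat.eq_zero_or_pos m with rfl | hm
    · simp
    · rw [Nat.choose_eq_zero_of_lt hm, Nat.cast_zero, zero_mul]
      positivity
  calc n.choose m * (m * α / n) ^ m ≤ n ^ m / m ! * (m * α / n) ^ m := by
        gcongr
        exact Nat.choose_le_pow_div m n
    _ = (m * α / n * n) ^ m / m ! := by ring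
    _ = (m * α) ^ m / m ! := by rw [div_mul_cancel₀ _ (by positivity)]

theorem pow_div_factorial_le_exp_one_pow {m : ℕ} (hm : 4 ≤ m) :
    (m : ℝ) ^ m / m ! ≤ exp 1 ^ m / 5 := by
  have hstirling := Stirling.le_factorial_stirling m
  have h5 : 5 ≤ √(2 * π * m) := by
    rw [Real.le_sqrt (by norm_num) (by positivity)]
    have : (4 : ℝ) ≤ m := by exact_mod_cast hm
    nlinarith [Real.pi_gt_d2]
  rw [div_le_div_iff₀ (by positivity) (by norm_num)]
  calc (m : ℝ) ^ m * 5 ≤ (m : ℝ) ^ m * √(2 * π * m) := by gcongr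
    _ = exp 1 ^ m * (√(2 * π * m) * (m / exp 1) ^ m) := by
        rw [div_pow]; field_simp
    _ ≤ exp 1 ^ m * m ! := by gcongr

theorem sum_mul_pow_div_factorial_le (N : ℕ) {α : ℝ} (hα0 : 0 ≤ α) (hα : α ≤ 5 / 17) :
    ∑ m ∈ Icc 1 N, (m * α) ^ m / m ! ≤ 3.4 * α := by
  set f : ℕ → ℝ := fun m => (m * α) ^ m / (m ! : ℝ)
  set x := exp 1 * α
  have hx0 : 0 ≤ x := by positivity
  have hx : x ≤ 2.72 * α := mul_le_mul_of_nonneg_right (by linarith [exp_one_lt_d9]) hα0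
  have hhead : ∑ m ∈ Ico 1 4, f m = α + 2 * α ^ 2 + 9 / 2 * α ^ 3 := by
    simp only [f, sum_Ico_eq_sum_range, sum_range_succ, sum_range_zero, factorial]
    push_cast
    ring
  have htail : ∑ m ∈ Ico 4 (N + 4), f m ≤ x ^ 4 := by
    calc ∑ m ∈ Ico 4 (N + 4), f m ≤ ∑ m ∈ Ico 4 (N + 4), x ^ m / 5 := by
          refine sum_le_sum fun m hm => ?_
          have := pow_div_factorial_le_exp_one_pow (mem_Ico.mp hm).1
          calc f m = (m : ℝ) ^ m / m ! * α ^ m := by simp only [f]; ring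
            _ ≤ exp 1 ^ m / 5 * α ^ m := by gcongr
            _ = x ^ m / 5 := by ring
      _ = (∑ m ∈ Ico 4 (N + 4), x ^ m) / 5 := by rw [sum_div]
      _ ≤ x ^ 4 / (1 - x) / 5 := by gcongr; exact geom_sum_Ico_le_of_lt_one hx0 (by linarith)
      _ ≤ x ^ 4 := by
          rw [div_div, div_le_iff₀ (by linarith)]
          nlinarith [pow_nonneg hx0 4]
  calc ∑ m ∈ Icc 1 N, f m ≤ ∑ m ∈ Ico 1 (N + 4), f m :=
        sum_le_sum_of_subset_of_nonneg (fun m hm => by rw [mem_Icc] at hm; rw [mem_Ico]; omega)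
          fun m _ _ => by positivity
    _ = ∑ m ∈ Ico 1 4, f m + ∑ m ∈ Ico 4 (N + 4), f m :=
        (sum_Ico_consecutive f (by omega) (by omega)).symm
    _ ≤ α + 2 * α ^ 2 + 9 / 2 * α ^ 3 + (2.72 * α) ^ 4 := by
        rw [hhead]; gcongr; exact htail.trans (by gcongr)
    _ ≤ 3.4 * α := by
        nlinarith [mul_nonneg hα0 hα0, mul_nonneg (mul_nonneg hα0 hα0) hα0]

theorem sum_choose_mul_pow_le (n : ℕ) {α : ℝ} (hα0 : 0 ≤ α) (hα : α ≤ 5 / 17) :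
    ∑ m ∈ Icc 1 n, n.choose m * (m * α / n) ^ m ≤ 3.4 * α :=
  (sum_le_sum fun m _ => choose_mul_pow_le_pow_div_factorial n m hα0).trans
    (sum_mul_pow_div_factorial_le n hα0 hα)

end RealBounds

section WeakNegativeDependence

variable {Ω ι : Type*} [MeasurableSpace Ω] {μ : Measure Ω} [Fintype ι] {P : ι → Ω → ℝ} {x : ℝ}

theorem measure_exists_card_eq_forall_le_le {t : ℝ≥0∞} (hmarg : ∀ i, μ {ω | P i ω ≤ x} ≤ t)
    (hwnd : ∀ A : Finset ι, μ (⋂ i ∈ A, {ω | P i ω ≤ x}) ≤ ∏ i ∈ A, μ {ω | P i ω ≤ x})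
    (m : ℕ) :
    μ {ω | ∃ A : Finset ι, #A = m ∧ ∀ i ∈ A, P i ω ≤ x} ≤ (Fintype.card ι).choose m * t ^ m := by
  have hcover : {ω | ∃ A : Finset ι, #A = m ∧ ∀ i ∈ A, P i ω ≤ x} =
      ⋃ A ∈ powersetCard m univ, ⋂ i ∈ A, {ω | P i ω ≤ x} := by
    ext ω; simp
  calc μ {ω | ∃ A : Finset ι, #A = m ∧ ∀ i ∈ A, P i ω ≤ x}
      ≤ ∑ A ∈ powersetCard m univ, μ (⋂ i ∈ A, {ω | P i ω ≤ x}) :=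
        hcover ▸ measure_biUnion_finset_le _ _
    _ ≤ ∑ A ∈ powersetCard m (univ : Finset ι), t ^ m := by
        refine sum_le_sum fun A hA => (hwnd A).trans ?_
        rw [← (mem_powersetCard.mp hA).2, ← prod_const]
        exact prod_le_prod' fun i _ => hmarg i
    _ = (Fintype.card ι).choose m * t ^ m := by
        rw [sum_const, card_powersetCard, card_univ, nsmul_eq_mul]

theorem measure_simesOn_le_le_ofReal_sum [Nonempty ι]
    (hunif : ∀ i, ∀ x ∈ Set.Icc (0 : ℝ) 1, μ {ω | P i ω ≤ x} ≤ ENNReal.ofReal x)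
    (hwnd : ∀ (A : Finset ι) (x : ℝ),
      μ (⋂ i ∈ A, {ω | P i ω ≤ x}) ≤ ∏ i ∈ A, μ {ω | P i ω ≤ x})
    {α : ℝ} (hα0 : 0 ≤ α) (hα1 : α ≤ 1) :
    μ {ω | simesOn univ (fun i => P i ω) ≤ α} ≤
      ENNReal.ofReal (∑ m ∈ Icc 1 (Fintype.card ι),
        (Fintype.card ι).choose m * (m * α / Fintype.card ι) ^ m) := by
  set n := Fintype.card ι
  have hn : (0 : ℝ) < n := by exact_mod_cast Fintype.card_pos
  have hlevel : ∀ m ∈ Icc 1 n, m * α / n ∈ Set.Icc (0 : ℝ) 1 := fun m hm =>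
    ⟨by positivity, div_le_one_of_le₀ ((mul_le_of_le_one_right (by positivity) hα1).trans
      (by exact_mod_cast (mem_Icc.mp hm).2)) hn.le⟩
  have hcover : {ω | simesOn univ (fun i => P i ω) ≤ α} ⊆
      ⋃ m ∈ Icc 1 n, {ω | ∃ A : Finset ι, #A = m ∧ ∀ i ∈ A, P i ω ≤ m * α / n} := by
    intro ω hω
    obtain ⟨m, hm, A, -, hA⟩ := exists_card_eq_forall_le_of_simesOn_le univ_nonempty hω
    exact Set.mem_biUnion hm ⟨A, hA⟩
  calc μ {ω | simesOn univ (fun i => P i ω) ≤ α}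
      ≤ ∑ m ∈ Icc 1 n, μ {ω | ∃ A : Finset ι, #A = m ∧ ∀ i ∈ A, P i ω ≤ m * α / n} :=
        (measure_mono hcover).trans (measure_biUnion_finset_le _ _)
    _ ≤ ∑ m ∈ Icc 1 n, n.choose m * ENNReal.ofReal (m * α / n) ^ m :=
        sum_le_sum fun m hm => measure_exists_card_eq_forall_le_le
          (fun i => hunif i _ (hlevel m hm)) (fun A => hwnd A _) m
    _ = ENNReal.ofReal (∑ m ∈ Icc 1 n, n.choose m * (m * α / n) ^ m) := by
        rw [ENNReal.ofReal_sum_of_nonneg fun m hm => by have := hlevel m hm; positivity]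
        refine sum_congr rfl fun m hm => ?_
        rw [ENNReal.ofReal_mul (by positivity), ENNReal.ofReal_natCast,
          ENNReal.ofReal_pow (hlevel m hm).1]

end WeakNegativeDependence

/-- If standard uniform p-values `P₁,…,P_K` are weakly negatively dependent, then
`P(S_K(P) ≤ α) ≤ 3.4 α` for all `α ∈ (0, 1)`. -/
theorem simes_wnd_mult_bound {Ω : Type*} [MeasurableSpace Ω] (μ : Measure Ω)
    [IsProbabilityMeasure μ] (K : ℕ) (hK : 0 < K) (P : Fin K → Ω → ℝ)
    (hunif : ∀ k, ∀ x ∈ Set.Icc (0 : ℝ) 1, μ {ω | P k ω ≤ x} = ENNReal.ofReal x)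
    (hwnd : ∀ (A : Finset (Fin K)) (x : ℝ),
      μ (⋂ k ∈ A, {ω | P k ω ≤ x}) ≤ ∏ k ∈ A, μ {ω | P k ω ≤ x})
    (α : ℝ) (hα : α ∈ Set.Ioo (0 : ℝ) 1) :
    μ {ω | simesOn Finset.univ (fun k => P k ω) ≤ α} ≤ ENNReal.ofReal (3.4 * α) := by
  obtain ⟨hα0, hα1⟩ := hα
  rcases le_or_gt 1 (3.4 * α) with hlarge | hsmall
  · exact prob_le_one.trans (ENNReal.ofReal_one ▸ ENNReal.ofReal_le_ofReal hlarge)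
  have : Nonempty (Fin K) := ⟨⟨0, hK⟩⟩
  refine (measure_simesOn_le_le_ofReal_sum (fun k x hx => (hunif k x hx).le) hwnd hα0.le
    hα1.le).trans (ENNReal.ofReal_le_ofReal ?_)
  rw [Fintype.card_fin]
  exact sum_choose_mul_pow_le K hα0.le (by linarith)
end

section
/- If e-values E_1,...,E_K are negatively upper orthant dependent, then for any constants λ_1,...,λ_K ∈ [0,1], the product ∏_{k=1}^K (1 − λ_k + λ_k·E_k) is an e-value. -/
/-!
The factors `Fₖ = 1 - λₖ + λₖ Eₖ` are nondecreasing affine images of the `Eₖ`, hence again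
negatively upper orthant dependent, and each is an e-value, being a mixture of `Eₖ` and `1`.
By the layer cake formula, `E[∏ Fₖ] = ∫_{(0,∞)^K} P(tₖ < Fₖ for all k) dt`; negative orthant
dependence bounds the integrand by `∏ P(tₖ < Fₖ)`, which is the same probability for independent
copies of the `Fₖ` on `Ω^K`. Running the layer cake formula backwards there gives
`E[∏ Fₖ] ≤ ∏ E[Fₖ] ≤ 1`.
-/

open MeasureTheory ProbabilityTheory Set

section

variable {ι : Type*} [Fintype ι]

theorem lintegral_prod_ofReal_eq_lintegral_measure_iInter {α : Type*} [MeasurableSpace α]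
    (ρ : Measure α) [SFinite ρ] {G : ι → α → ℝ} (hG : ∀ i, Measurable (G i)) :
    ∫⁻ a, ∏ i, ENNReal.ofReal (G i a) ∂ρ =
      ∫⁻ t, ρ (⋂ i, {a | t i < G i a}) ∂Measure.pi fun _ ↦ volume.restrict (Ioi 0) := by
  set S : Set (α × (ι → ℝ)) := ⋂ i, {p | p.2 i < G i p.1}
  have hS : MeasurableSet S := MeasurableSet.iInter fun i ↦
    measurableSet_lt ((measurable_pi_apply i).comp measurable_snd) ((hG i).comp measurable_fst)
  have hslice (a : α) : Prod.mk a ⁻¹' S = univ.pi fun i ↦ Iio (G i a) := by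
    ext t; simp [S]
  calc ∫⁻ a, ∏ i, ENNReal.ofReal (G i a) ∂ρ
      = ∫⁻ a, (Measure.pi fun _ ↦ volume.restrict (Ioi 0)) (Prod.mk a ⁻¹' S) ∂ρ := by
        refine lintegral_congr fun a ↦ ?_
        simp_rw [hslice, Measure.pi_pi, Measure.restrict_apply measurableSet_Iio, Iio_inter_Ioi,
          Real.volume_Ioo, sub_zero]
    _ = (ρ.prod (Measure.pi fun _ ↦ volume.restrict (Ioi 0))) S := (Measure.prod_apply hS).symm
    _ = ∫⁻ t, ρ (⋂ i, {a | t i < G i a}) ∂Measure.pi fun _ ↦ volume.restrict (Ioi 0) := by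
        simp only [Measure.prod_apply_symm hS, S, preimage_iInter, preimage_ofPred_eq]

def NegUpperOrthantDependent {Ω : Type*} [MeasurableSpace Ω] (μ : Measure Ω)
    (X : ι → Ω → ℝ) : Prop :=
  ∀ x : ι → ℝ, μ (⋂ i, {ω | x i < X i ω}) ≤ ∏ i, μ {ω | x i < X i ω}

theorem NegUpperOrthantDependent.lintegral_prod_le {Ω : Type*} [MeasurableSpace Ω]
    {μ : Measure Ω} [IsProbabilityMeasure μ] {X : ι → Ω → ℝ} (hX : NegUpperOrthantDependent μ X)
    (hXm : ∀ i, Measurable (X i)) :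
    ∫⁻ ω, ∏ i, ENNReal.ofReal (X i ω) ∂μ ≤ ∏ i, ∫⁻ ω, ENNReal.ofReal (X i ω) ∂μ := by
  have hXm' (i : ι) : Measurable fun ω : ι → Ω ↦ X i (ω i) := (hXm i).comp (measurable_pi_apply i)
  calc ∫⁻ ω, ∏ i, ENNReal.ofReal (X i ω) ∂μ
      = ∫⁻ t, μ (⋂ i, {ω | t i < X i ω}) ∂Measure.pi fun _ ↦ volume.restrict (Ioi 0) :=
        lintegral_prod_ofReal_eq_lintegral_measure_iInter μ hXm
    _ ≤ ∫⁻ t, ∏ i, μ {ω | t i < X i ω} ∂Measure.pi fun _ ↦ volume.restrict (Ioi 0) :=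
        lintegral_mono fun t ↦ hX t
    _ = ∫⁻ t, Measure.pi (fun _ ↦ μ) (⋂ i, {ω | t i < X i (ω i)})
          ∂Measure.pi fun _ ↦ volume.restrict (Ioi 0) := by
        refine lintegral_congr fun t ↦ ?_
        rw [← Measure.pi_pi]
        congr 1
        ext ω; simp
    _ = ∫⁻ ω, ∏ i, ENNReal.ofReal (X i (ω i)) ∂Measure.pi fun _ ↦ μ :=
        (lintegral_prod_ofReal_eq_lintegral_measure_iInter _ hXm').symm
    _ = ∏ i, ∫⁻ ω, ENNReal.ofReal (X i (ω i)) ∂Measure.pi fun _ ↦ μ :=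
        lintegral_prod_eq_prod_lintegral_of_indepFun _ _
          (iIndepFun_pi fun i ↦ (hXm i).ennreal_ofReal.aemeasurable)
          fun i ↦ (hXm' i).ennreal_ofReal
    _ = ∏ i, ∫⁻ ω, ENNReal.ofReal (X i ω) ∂μ := by
        refine Finset.prod_congr rfl fun i _ ↦ ?_
        exact (measurePreserving_eval (fun _ ↦ μ) i).lintegral_comp (hXm i).ennreal_ofReal

theorem exists_setOf_lt_affine_eq_setOf_lt {Ω : Type*} {X : Ω → ℝ} (hX : ∀ ω, 0 ≤ X ω)
    {a b t : ℝ} (hb : 0 ≤ b) (hab : b = 0 → t < a) :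
    ∃ x, {ω | t < a + b * X ω} = {ω | x < X ω} := by
  rcases hb.eq_or_lt with rfl | hb
  · refine ⟨-1, ?_⟩
    ext ω
    simp only [zero_mul, add_zero, mem_ofPred_eq, hab rfl, true_iff]
    linarith [hX ω]
  · refine ⟨(t - a) / b, ?_⟩
    ext ω
    simp only [mem_ofPred_eq, div_lt_iff₀ hb]
    constructor <;> intro h <;> linarith [mul_comm b (X ω)]

theorem NegUpperOrthantDependent.affine {Ω : Type*} [MeasurableSpace Ω] {μ : Measure Ω}
    {X : ι → Ω → ℝ} (hX : NegUpperOrthantDependent μ X) (hX0 : ∀ i ω, 0 ≤ X i ω)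
    (a : ι → ℝ) {b : ι → ℝ} (hb : ∀ i, 0 ≤ b i) :
    NegUpperOrthantDependent μ fun i ω ↦ a i + b i * X i ω := by
  intro t
  by_cases hab : ∀ i, b i = 0 → t i < a i
  · choose x hx using fun i ↦ exists_setOf_lt_affine_eq_setOf_lt (hX0 i) (hb i) (hab i)
    simp only [hx]
    exact hX x
  · push Not at hab
    obtain ⟨i, hbi, hti⟩ := hab
    have hempty : {ω | t i < a i + b i * X i ω} = ∅ := by
      ext ω
      simp only [hbi, zero_mul, add_zero, mem_ofPred_eq, mem_empty_iff_false, iff_false, not_lt]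
      exact hti
    refine le_trans (measure_mono (iInter_subset _ i)) ?_
    simp [hempty]

theorem lintegral_ofReal_one_sub_add_mul_le_one {Ω : Type*} [MeasurableSpace Ω] {μ : Measure Ω}
    [IsProbabilityMeasure μ] {X : Ω → ℝ} (hX0 : ∀ ω, 0 ≤ X ω)
    (hX : ∫⁻ ω, ENNReal.ofReal (X ω) ∂μ ≤ 1) {c : ℝ} (hc0 : 0 ≤ c) (hc1 : c ≤ 1) :
    ∫⁻ ω, ENNReal.ofReal (1 - c + c * X ω) ∂μ ≤ 1 := by
  have hsplit (ω : Ω) : ENNReal.ofReal (1 - c + c * X ω) =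
      ENNReal.ofReal (1 - c) + ENNReal.ofReal c * ENNReal.ofReal (X ω) := by
    rw [ENNReal.ofReal_add (by linarith) (mul_nonneg hc0 (hX0 ω)), ENNReal.ofReal_mul hc0]
  calc ∫⁻ ω, ENNReal.ofReal (1 - c + c * X ω) ∂μ
      = ENNReal.ofReal (1 - c) + ENNReal.ofReal c * ∫⁻ ω, ENNReal.ofReal (X ω) ∂μ := by
        simp_rw [hsplit]
        rw [lintegral_add_left measurable_const, lintegral_const, measure_univ, mul_one,
          lintegral_const_mul' _ _ ENNReal.ofReal_ne_top]
    _ ≤ ENNReal.ofReal (1 - c) + ENNReal.ofReal c * 1 := by gcongr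
    _ = 1 := by
        rw [mul_one, ← ENNReal.ofReal_add (by linarith) hc0, sub_add_cancel, ENNReal.ofReal_one]

end

/-- If e-values `E₁,…,E_K` are negatively upper orthant dependent, then for any constants
`λ₁,…,λ_K ∈ [0,1]`, the product `∏ (1 - λₖ + λₖ Eₖ)` is an e-value. -/
theorem nuod_evalues_lambda_product {Ω : Type*} [MeasurableSpace Ω] (μ : Measure Ω)
    [IsProbabilityMeasure μ] (K : ℕ) (E : Fin K → Ω → ℝ)
    (hmeas : ∀ i, Measurable (E i)) (hnn : ∀ i ω, 0 ≤ E i ω)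
    (hev : ∀ i, ∫⁻ ω, ENNReal.ofReal (E i ω) ∂μ ≤ 1)
    (hnuod : ∀ x : Fin K → ℝ,
      μ (⋂ i, {ω | x i < E i ω}) ≤ ∏ i, μ {ω | x i < E i ω})
    (lam : Fin K → ℝ) (hlam0 : ∀ k, 0 ≤ lam k) (hlam1 : ∀ k, lam k ≤ 1) :
    (∀ ω, 0 ≤ ∏ k, (1 - lam k + lam k * E k ω)) ∧
      ∫⁻ ω, ENNReal.ofReal (∏ k, (1 - lam k + lam k * E k ω)) ∂μ ≤ 1 := by
  have hfactor (k : Fin K) (ω : Ω) : 0 ≤ 1 - lam k + lam k * E k ω := by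
    linarith [mul_nonneg (hlam0 k) (hnn k ω), hlam1 k]
  have hdep : NegUpperOrthantDependent μ fun k ω ↦ 1 - lam k + lam k * E k ω :=
    NegUpperOrthantDependent.affine hnuod hnn _ hlam0
  refine ⟨fun ω ↦ Finset.prod_nonneg fun k _ ↦ hfactor k ω, ?_⟩
  calc ∫⁻ ω, ENNReal.ofReal (∏ k, (1 - lam k + lam k * E k ω)) ∂μ
      = ∫⁻ ω, ∏ k, ENNReal.ofReal (1 - lam k + lam k * E k ω) ∂μ := by
        simp_rw [ENNReal.ofReal_prod_of_nonneg fun k _ ↦ hfactor k _]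
    _ ≤ ∏ k, ∫⁻ ω, ENNReal.ofReal (1 - lam k + lam k * E k ω) ∂μ :=
        hdep.lintegral_prod_le fun k ↦ measurable_const.add (measurable_const.mul (hmeas k))
    _ ≤ 1 := Finset.prod_le_one' fun k _ ↦
        lintegral_ofReal_one_sub_add_mul_le_one (hnn k) (hev k) (hlam0 k) (hlam1 k)
end

section
/- Let X_1,...,X_K be independent random variables with X_{K+1} := X_1, let f_i : ℝ² → ℝ be component-wise increasing functions, and set Y_i = f_i(X_i, −X_{i+1}). Then (Y_1,...,Y_K) is negatively upper orthant dependent: P(Y_1 > y_1, ..., Y_K > y_K) ≤ ∏_{i=1}^K P(Y_i > y_i) for all y_1,...,y_K ∈ ℝ. -/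
/-!
Each event `{yᵢ < Yᵢ}` is the preimage of an upper set `Sᵢ ⊆ ℝ²` under `(Xᵢ, -X_{i+1})`, so it
suffices to prove the cyclic product inequality `E ∏ gᵢ(Xᵢ, -X_{i+1}) ≤ ∏ E gᵢ(Xᵢ, -X_{i+1})` for
measurable component-wise increasing `gᵢ ≥ 0` and to apply it to indicators. The `Sᵢ` need not be
Borel, but each one agrees with a measurable upper set up to a null set of any product measure.

For the inequality, fix the first variable `X₀ = s`: the cycle becomes a path from `s` back to
`s`. Integrating the path variables out one at a time, each step is Chebyshev's inequality
`E[φ ψ] ≤ E φ · E ψ` for an antitone `φ` and a monotone `ψ`. This bounds the path integral by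
`A(s) · C · B(s)` with `A` increasing, `B` decreasing and `C` the product of the middle
expectations, and a last application of Chebyshev's inequality integrates out `s`.
-/

open MeasureTheory ProbabilityTheory
open scoped ENNReal

theorem ENNReal.mul_add_mul_le_mul_add_mul {a b c d : ℝ≥0∞} (hab : a ≤ b) (hcd : c ≤ d) :
    a * d + b * c ≤ a * c + b * d := by
  obtain ⟨u, rfl⟩ := exists_add_of_le hab
  obtain ⟨v, rfl⟩ := exists_add_of_le hcd
  calc a * (c + v) + (a + u) * c ≤ a * (c + v) + (a + u) * c + u * v := le_self_add
    _ = a * c + (a + u) * (c + v) := by ring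

theorem Antivary.ennreal_mul_add_mul_le_mul_add_mul {ι : Type*} {f g : ι → ℝ≥0∞}
    (hfg : Antivary f g) (i j : ι) : f i * g i + f j * g j ≤ f i * g j + f j * g i := by
  rcases lt_trichotomy (g i) (g j) with h | h | h
  · rw [add_comm, add_comm (f i * g j)]
    exact ENNReal.mul_add_mul_le_mul_add_mul (hfg h) h.le
  · rw [h]
  · exact ENNReal.mul_add_mul_le_mul_add_mul (hfg h) h.le

theorem Antivary.lintegral_mul_le_lintegral_mul_lintegral {α : Type*} [MeasurableSpace α]
    (μ : Measure α) [IsProbabilityMeasure μ] {f g : α → ℝ≥0∞} (hf : Measurable f)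
    (hg : Measurable g) (hfg : Antivary f g) :
    ∫⁻ x, f x * g x ∂μ ≤ (∫⁻ x, f x ∂μ) * ∫⁻ x, g x ∂μ := by
  set I := ∫⁻ x, f x * g x ∂μ
  have hx : ∀ x, f x * g x + I ≤ f x * ∫⁻ y, g y ∂μ + (∫⁻ y, f y ∂μ) * g x := fun x => by
    calc f x * g x + I = ∫⁻ y, (f x * g x + f y * g y) ∂μ := by
          rw [lintegral_add_left (f := fun _ => f x * g x) measurable_const, lintegral_const,
            measure_univ, mul_one]
      _ ≤ ∫⁻ y, (f x * g y + f y * g x) ∂μ :=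
          lintegral_mono fun y => hfg.ennreal_mul_add_mul_le_mul_add_mul x y
      _ = _ := by
          rw [lintegral_add_left (hg.const_mul _), lintegral_const_mul _ hg,
            lintegral_mul_const _ hf]
  have h2 : 2 * I ≤ 2 * ((∫⁻ x, f x ∂μ) * ∫⁻ x, g x ∂μ) := by
    calc 2 * I = ∫⁻ x, (f x * g x + I) ∂μ := by
          rw [lintegral_add_right _ measurable_const, lintegral_const, measure_univ, mul_one,
            two_mul]
      _ ≤ _ := lintegral_mono hx
      _ = _ := by
          rw [lintegral_add_left (hf.mul_const _), lintegral_mul_const _ hf,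
            lintegral_const_mul _ hg, two_mul]
  exact (ENNReal.mul_le_mul_iff_right two_ne_zero ENNReal.ofNat_ne_top).mp h2

theorem lintegral_pi_fin_succ {α : Type*} [MeasurableSpace α] {n : ℕ}
    (μ : Fin (n + 1) → Measure α) [∀ i, SigmaFinite (μ i)] {F : (Fin (n + 1) → α) → ℝ≥0∞}
    (hF : Measurable F) :
    ∫⁻ x, F x ∂Measure.pi μ =
      ∫⁻ a, ∫⁻ w, F (Fin.cons a w) ∂Measure.pi (fun j => μ j.succ) ∂μ 0 := by
  have he := (measurePreserving_piFinSuccAbove μ 0).symm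
  rw [← he.lintegral_comp_emb (MeasurableEquiv.measurableEmbedding _),
    lintegral_prod (fun p => F ((MeasurableEquiv.piFinSuccAbove (fun _ => α) 0).symm p))
      (hF.comp he.measurable).aemeasurable]
  simp_rw [MeasurableEquiv.piFinSuccAbove_symm_apply, Fin.insertNthEquiv,
    Fin.insertNth_zero, Equiv.coe_fn_mk, Fin.zero_succAbove, cast_eq]

theorem Monotone.antitone_mk_neg {β : Type*} [Preorder β] {g : ℝ × ℝ → β} (hg : Monotone g)
    (a : ℝ) : Antitone fun b => g (a, -b) :=
  ((monotone_prod_iff.1 hg).1 a).comp_antitone fun _ _ => neg_le_neg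

theorem lintegral_pi_path_le {n : ℕ} (ν : Fin (n + 1) → Measure ℝ)
    [∀ i, IsProbabilityMeasure (ν i)] {g : Fin n → ℝ × ℝ → ℝ≥0∞} (hg : ∀ i, Measurable (g i))
    (hgm : ∀ i, Monotone (g i)) {φ ψ : ℝ → ℝ≥0∞} (hφ : Measurable φ) (hφa : Antitone φ)
    (hψ : Measurable ψ) (hψm : Monotone ψ) :
    ∫⁻ x, φ (x 0) * (∏ i, g i (x i.castSucc, -x i.succ)) * ψ (x (Fin.last n)) ∂Measure.pi ν ≤
      (∫⁻ a, φ a ∂ν 0) * (∏ i, ∫⁻ b, ∫⁻ a, g i (a, -b) ∂ν i.castSucc ∂ν i.succ) *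
        ∫⁻ a, ψ a ∂ν (Fin.last n) := by
  induction n generalizing φ with
  | zero =>
    rw [lintegral_pi_fin_succ _ (by fun_prop)]
    simpa using (hφa.antivary hψm).lintegral_mul_le_lintegral_mul_lintegral (ν 0) hφ hψ
  | succ n ih =>
    set φ' : ℝ → ℝ≥0∞ := fun b => ∫⁻ a, g 0 (a, -b) ∂ν 0
    set R : (Fin (n + 1) → ℝ) → ℝ≥0∞ := fun w =>
      (∏ i : Fin n, g i.succ (w i.castSucc, -w i.succ)) * ψ (w (Fin.last n))
    have hstep : ∀ b, ∫⁻ a, φ a * g 0 (a, -b) ∂ν 0 ≤ (∫⁻ a, φ a ∂ν 0) * φ' b := fun b =>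
      (hφa.antivary ((monotone_prod_iff.1 (hgm 0)).2 (-b))).lintegral_mul_le_lintegral_mul_lintegral
        (ν 0) hφ (by fun_prop)
    have hφ'a : Antitone φ' := fun _ _ h => lintegral_mono fun a => (hgm 0).antitone_mk_neg a h
    calc ∫⁻ x, φ (x 0) * (∏ i, g i (x i.castSucc, -x i.succ)) * ψ (x (Fin.last (n + 1)))
          ∂Measure.pi ν
        = ∫⁻ w, (∫⁻ a, φ a * g 0 (a, -w 0) ∂ν 0) * R w ∂Measure.pi (fun j => ν j.succ) := by
          rw [lintegral_pi_fin_succ _ (by fun_prop), lintegral_lintegral_swap (by fun_prop)]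
          refine lintegral_congr fun w => ?_
          rw [← lintegral_mul_const _ (by fun_prop)]
          refine lintegral_congr fun a => ?_
          simp only [R, Fin.prod_univ_succ, Fin.cons_zero, Fin.cons_succ, Fin.castSucc_zero,
            Fin.castSucc_succ, Fin.cons_last]
          ring
      _ ≤ ∫⁻ w, (∫⁻ a, φ a ∂ν 0) * φ' (w 0) * R w ∂Measure.pi (fun j => ν j.succ) :=
          lintegral_mono fun w => mul_le_mul_left (hstep (w 0)) _
      _ = (∫⁻ a, φ a ∂ν 0) * ∫⁻ w, φ' (w 0) * R w ∂Measure.pi (fun j => ν j.succ) := by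
          rw [← lintegral_const_mul _ (by fun_prop)]
          simp_rw [mul_assoc]
      _ ≤ (∫⁻ a, φ a ∂ν 0) * ((∫⁻ b, φ' b ∂ν 1) *
            (∏ i : Fin n, ∫⁻ b, ∫⁻ a, g i.succ (a, -b) ∂ν i.succ.castSucc ∂ν i.succ.succ) *
              ∫⁻ a, ψ a ∂ν (Fin.last (n + 1))) := by
          gcongr
          simp_rw [R, ← mul_assoc]
          exact ih (fun j => ν j.succ) (fun i => hg i.succ) (fun i => hgm i.succ) (by fun_prop)
            hφ'a
      _ = _ := by
          rw [Fin.prod_univ_succ]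
          simp only [φ', Fin.castSucc_zero, Fin.succ_zero_eq_one]
          ring

theorem Fin.castSucc_succ_add_one {n : ℕ} (i : Fin n) : i.castSucc.succ + 1 = i.succ.succ := by
  rw [Fin.succ_castSucc, Fin.coeSucc_eq_succ]

theorem lintegral_pi_cycle_le {n : ℕ} (ν : Fin (n + 2) → Measure ℝ)
    [∀ i, IsProbabilityMeasure (ν i)] {g : Fin (n + 2) → ℝ × ℝ → ℝ≥0∞}
    (hg : ∀ i, Measurable (g i)) (hgm : ∀ i, Monotone (g i)) :
    ∫⁻ x, ∏ i, g i (x i, -x (i + 1)) ∂Measure.pi ν ≤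
      ∏ i, ∫⁻ b, ∫⁻ a, g i (a, -b) ∂ν i ∂ν (i + 1) := by
  set l := Fin.last (n + 1)
  set A : ℝ → ℝ≥0∞ := fun s => ∫⁻ b, g 0 (s, -b) ∂ν 1
  set B : ℝ → ℝ≥0∞ := fun s => ∫⁻ a, g l (a, -s) ∂ν l
  set C := ∏ i : Fin n, ∫⁻ b, ∫⁻ a, g i.castSucc.succ (a, -b) ∂ν i.castSucc.succ ∂ν i.succ.succ
  have hA : Monotone A := fun _ _ h =>
    lintegral_mono fun b => (monotone_prod_iff.1 (hgm 0)).2 (-b) h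
  have hB : Antitone B := fun _ _ h => lintegral_mono fun a => (hgm l).antitone_mk_neg a h
  have hpath : ∀ s, ∫⁻ w, ∏ i, g i ((Fin.cons s w : Fin (n + 2) → ℝ) i,
        -(Fin.cons s w : Fin (n + 2) → ℝ) (i + 1)) ∂Measure.pi (fun j => ν j.succ) ≤
      A s * C * B s := fun s => by
    convert lintegral_pi_path_le (fun j => ν j.succ) (g := fun i => g i.castSucc.succ)
      (fun i => hg _) (fun i => hgm _) (φ := fun b => g 0 (s, -b)) (ψ := fun a => g l (a, -s))
      (by fun_prop) ((hgm 0).antitone_mk_neg s) (by fun_prop)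
      ((monotone_prod_iff.1 (hgm l)).2 (-s)) using 2
    · funext w
      rw [Fin.prod_univ_succ, Fin.prod_univ_castSucc]
      simp [Fin.castSucc_succ_add_one, l, mul_assoc]
    · rfl
    · rfl
  calc ∫⁻ x, ∏ i, g i (x i, -x (i + 1)) ∂Measure.pi ν
      ≤ ∫⁻ s, A s * C * B s ∂ν 0 := by
        rw [lintegral_pi_fin_succ _ (by fun_prop)]
        exact lintegral_mono hpath
    _ = C * ∫⁻ s, A s * B s ∂ν 0 := by
        rw [← lintegral_const_mul _ (by fun_prop)]
        congr 1 with s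
        ring
    _ ≤ C * ((∫⁻ s, A s ∂ν 0) * ∫⁻ s, B s ∂ν 0) := by
        gcongr
        exact (hA.antivary hB).lintegral_mul_le_lintegral_mul_lintegral _ (by fun_prop)
          (by fun_prop)
    _ = ∏ i, ∫⁻ b, ∫⁻ a, g i (a, -b) ∂ν i ∂ν (i + 1) := by
        rw [Fin.prod_univ_succ, Fin.prod_univ_castSucc, lintegral_lintegral_swap (by fun_prop)]
        simp only [zero_add, Fin.castSucc_succ_add_one, Fin.succ_last, Nat.succ_eq_add_one,
          Fin.last_add_one, B, C, l]
        ring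

theorem IsUpperSet.monotone_indicator_one {α : Type*} [Preorder α] {s : Set α}
    (hs : IsUpperSet s) : Monotone (s.indicator (1 : α → ℝ≥0∞)) := by
  intro p q hpq
  by_cases hp : p ∈ s
  · rw [Set.indicator_of_mem hp, Set.indicator_of_mem (hs hpq hp)]
    exact le_rfl
  · rw [Set.indicator_of_notMem hp]
    exact zero_le

theorem MeasureTheory.Measure.countable_setOf_measure_singleton_ne_zero {α : Type*}
    [MeasurableSpace α] [MeasurableSingletonClass α] (ν : Measure α) [SFinite ν] :
    {c | ν {c} ≠ 0}.Countable := by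
  simpa [pos_iff_ne_zero] using Measure.countable_meas_level_set_pos (μ := ν) measurable_id

noncomputable def lowerEdge (S : Set (ℝ × ℝ)) (x : ℝ) : EReal :=
  ⨅ (z : ℝ) (_ : (x, z) ∈ S), (z : EReal)

/-- Off the atoms of `ν`, an upper set `S` lies strictly above its lower edge except on the graph
of the edge, whose vertical sections are `ν`-null. -/
def upperCore (S : Set (ℝ × ℝ)) (ν : Measure ℝ) : Set (ℝ × ℝ) :=
  {p | lowerEdge S p.1 < p.2} ∪ (S ∩ Prod.snd ⁻¹' {c | ν {c} ≠ 0})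

theorem lowerEdge_le {S : Set (ℝ × ℝ)} {x z : ℝ} (h : (x, z) ∈ S) : lowerEdge S x ≤ z :=
  iInf₂_le z h

namespace IsUpperSet

variable {S : Set (ℝ × ℝ)}

theorem antitone_lowerEdge (hS : IsUpperSet S) : Antitone (lowerEdge S) :=
  fun _ _ h => le_iInf₂ fun _ hz => lowerEdge_le (hS (Prod.mk_le_mk.2 ⟨h, le_rfl⟩) hz)

theorem mem_of_lowerEdge_lt (hS : IsUpperSet S) {x z : ℝ} (h : lowerEdge S x < z) :
    (x, z) ∈ S := by
  obtain ⟨z', h'⟩ := iInf_lt_iff.1 h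
  obtain ⟨hz', hlt⟩ := iInf_lt_iff.1 h'
  exact hS (Prod.mk_le_mk.2 ⟨le_rfl, (EReal.coe_lt_coe_iff.1 hlt).le⟩) hz'

theorem upperCore_subset (hS : IsUpperSet S) (ν : Measure ℝ) : upperCore S ν ⊆ S := by
  rintro ⟨x, z⟩ (hp | hp)
  · exact hS.mem_of_lowerEdge_lt hp
  · exact hp.1

theorem isUpperSet_upperCore (hS : IsUpperSet S) (ν : Measure ℝ) :
    IsUpperSet (upperCore S ν) := by
  rintro ⟨x, z⟩ ⟨x', z'⟩ ⟨hx, hz⟩ (hp | ⟨hpS, hpa⟩)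
  · left
    calc lowerEdge S x' ≤ lowerEdge S x := hS.antitone_lowerEdge hx
      _ < z := hp
      _ ≤ z' := EReal.coe_le_coe_iff.2 hz
  rcases hz.lt_or_eq with hlt | rfl
  · left
    calc lowerEdge S x' ≤ lowerEdge S x := hS.antitone_lowerEdge hx
      _ ≤ z := lowerEdge_le hpS
      _ < z' := EReal.coe_lt_coe_iff.2 hlt
  · exact .inr ⟨hS ⟨hx, le_rfl⟩ hpS, hpa⟩

theorem measurableSet_upperCore (hS : IsUpperSet S) (ν : Measure ℝ) [SFinite ν] :
    MeasurableSet (upperCore S ν) := by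
  have hrows : S ∩ Prod.snd ⁻¹' {c | ν {c} ≠ 0} =
      ⋃ c ∈ {c | ν {c} ≠ 0}, {x | (x, c) ∈ S} ×ˢ {c} := by
    ext ⟨x, z⟩
    simp [and_comm]
  refine (measurableSet_lt (hS.antitone_lowerEdge.measurable.comp measurable_fst)
    (measurable_coe_real_ereal.comp measurable_snd)).union ?_
  rw [hrows]
  exact .biUnion (Measure.countable_setOf_measure_singleton_ne_zero ν) fun c _ =>
    (hS.preimage fun _ _ h => ⟨h, le_rfl⟩).ordConnected.measurableSet.prod
      (measurableSet_singleton c)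

theorem measure_diff_upperCore (hS : IsUpperSet S) (μ ν : Measure ℝ) [SFinite ν] :
    μ.prod ν (S \ upperCore S ν) = 0 := by
  set N := {p : ℝ × ℝ | lowerEdge S p.1 = p.2} ∩ Prod.snd ⁻¹' {c | ν {c} ≠ 0}ᶜ
  have hsub : S \ upperCore S ν ⊆ N := by
    rintro ⟨x, z⟩ ⟨hpS, hpM⟩
    simp only [upperCore, Set.mem_union, Set.mem_ofPred_eq, not_or, not_lt, Set.mem_inter_iff,
      Set.mem_preimage, not_and] at hpM
    exact ⟨le_antisymm (lowerEdge_le hpS) hpM.1, hpM.2 hpS⟩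
  have hN : MeasurableSet N :=
    (measurableSet_eq_fun (hS.antitone_lowerEdge.measurable.comp measurable_fst)
      (measurable_coe_real_ereal.comp measurable_snd)).inter
      (measurable_snd (Measure.countable_setOf_measure_singleton_ne_zero ν).measurableSet.compl)
  have hsection : ∀ x, ν (Prod.mk x ⁻¹' N) = 0 := fun x => by
    have hsingle : (Prod.mk x ⁻¹' N).Subsingleton := fun z hz z' hz' =>
      EReal.coe_injective (hz.1.symm.trans hz'.1)
    rcases hsingle.eq_empty_or_singleton with h | ⟨z, h⟩
    · simp [h]
    · have hz : z ∈ Prod.mk x ⁻¹' N := h ▸ rfl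
      simpa [h] using hz.2
  exact measure_mono_null hsub (by simp [Measure.prod_apply hN, hsection])

theorem upperCore_ae_eq (hS : IsUpperSet S) (μ ν : Measure ℝ) [SFinite ν] :
    upperCore S ν =ᵐ[μ.prod ν] S :=
  ae_eq_set.2 ⟨by simp [Set.sdiff_eq_empty.2 (hS.upperCore_subset ν)],
    hS.measure_diff_upperCore μ ν⟩

end IsUpperSet

def cyclicPair {Ω : Type*} {K : ℕ} [NeZero K] (X : Fin K → Ω → ℝ) (i : Fin K) (ω : Ω) :
    ℝ × ℝ :=
  (X i ω, -X (i + 1) ω)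

theorem measurable_cyclicPair {Ω : Type*} [MeasurableSpace Ω] {K : ℕ} [NeZero K]
    {X : Fin K → Ω → ℝ} (hX : ∀ i, Measurable (X i)) (i : Fin K) :
    Measurable (cyclicPair X i) :=
  (hX i).prodMk (hX (i + 1)).neg

namespace ProbabilityTheory.iIndepFun

variable {Ω : Type*} [MeasurableSpace Ω] {μ : Measure Ω} {n : ℕ} {X : Fin (n + 2) → Ω → ℝ}

theorem lintegral_prod_cyclic_le (hindep : iIndepFun X μ) (hX : ∀ i, Measurable (X i))
    {g : Fin (n + 2) → ℝ × ℝ → ℝ≥0∞} (hg : ∀ i, Measurable (g i)) (hgm : ∀ i, Monotone (g i)) :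
    ∫⁻ ω, ∏ i, g i (cyclicPair X i ω) ∂μ ≤ ∏ i, ∫⁻ ω, g i (cyclicPair X i ω) ∂μ := by
  have := hindep.isProbabilityMeasure
  have : ∀ i, IsProbabilityMeasure (μ.map (X i)) := fun i =>
    Measure.isProbabilityMeasure_map (hX i).aemeasurable
  have hgneg : ∀ i, Measurable fun p : ℝ × ℝ => g i (p.1, -p.2) := fun i =>
    (hg i).comp (measurable_fst.prodMk measurable_snd.neg)
  have hpair : ∀ i, ∫⁻ ω, g i (cyclicPair X i ω) ∂μ =
      ∫⁻ b, ∫⁻ a, g i (a, -b) ∂μ.map (X i) ∂μ.map (X (i + 1)) := fun i => by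
    have hlaw := (hindep.indepFun (by simp : i ≠ i + 1)).map_prod_eq_prod_map_map
      (hX i).aemeasurable (hX (i + 1)).aemeasurable
    calc ∫⁻ ω, g i (cyclicPair X i ω) ∂μ
        = ∫⁻ p, g i (p.1, -p.2) ∂μ.map (fun ω => (X i ω, X (i + 1) ω)) :=
          (lintegral_map (hgneg i) ((hX i).prodMk (hX (i + 1)))).symm
      _ = _ := by
          rw [hlaw]
          exact lintegral_prod_symm _ (hgneg i).aemeasurable
  calc ∫⁻ ω, ∏ i, g i (cyclicPair X i ω) ∂μ
      = ∫⁻ x, ∏ i, g i (x i, -x (i + 1)) ∂μ.map (fun ω i => X i ω) :=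
        (lintegral_map (Finset.measurable_prod _ fun i _ =>
          (hgneg i).comp ((measurable_pi_apply i).prodMk (measurable_pi_apply (i + 1))))
          (measurable_pi_lambda _ hX)).symm
    _ ≤ _ := by
        rw [hindep.map_fun_eq_pi_map fun i => (hX i).aemeasurable]
        simp_rw [hpair]
        exact lintegral_pi_cycle_le _ hg hgm

theorem measure_iInter_cyclic_le (hindep : iIndepFun X μ) (hX : ∀ i, Measurable (X i))
    {M : Fin (n + 2) → Set (ℝ × ℝ)} (hM : ∀ i, MeasurableSet (M i))
    (hMu : ∀ i, IsUpperSet (M i)) :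
    μ (⋂ i, cyclicPair X i ⁻¹' M i) ≤ ∏ i, μ (cyclicPair X i ⁻¹' M i) := by
  have hpre : ∀ i, MeasurableSet (cyclicPair X i ⁻¹' M i) := fun i =>
    measurable_cyclicPair hX i (hM i)
  have hind : ∀ ω, (⋂ i, cyclicPair X i ⁻¹' M i).indicator 1 ω =
      ∏ i, (M i).indicator (1 : ℝ × ℝ → ℝ≥0∞) (cyclicPair X i ω) := fun ω => by
    rw [show ∏ i, (M i).indicator 1 (cyclicPair X i ω) =
      ∏ i, (cyclicPair X i ⁻¹' M i).indicator 1 ω from rfl, prod_indicator_const_apply]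
    simp
  rw [← lintegral_indicator_one (MeasurableSet.iInter hpre)]
  simp_rw [← lintegral_indicator_one (hpre _), hind]
  exact hindep.lintegral_prod_cyclic_le hX (fun i => measurable_one.indicator (hM i))
    fun i => (hMu i).monotone_indicator_one

theorem measure_iInter_cyclic_le_of_isUpperSet (hindep : iIndepFun X μ)
    (hX : ∀ i, Measurable (X i)) {S : Fin (n + 2) → Set (ℝ × ℝ)} (hS : ∀ i, IsUpperSet (S i)) :
    μ (⋂ i, cyclicPair X i ⁻¹' S i) ≤ ∏ i, μ (cyclicPair X i ⁻¹' S i) := by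
  have := hindep.isProbabilityMeasure
  set M := fun i => upperCore (S i) (μ.map fun ω => -X (i + 1) ω)
  have hae : ∀ i, cyclicPair X i ⁻¹' M i =ᵐ[μ] cyclicPair X i ⁻¹' S i := fun i => by
    have hlaw : μ.map (cyclicPair X i) = (μ.map (X i)).prod (μ.map fun ω => -X (i + 1) ω) :=
      ((hindep.indepFun (by simp : i ≠ i + 1)).comp measurable_id
        measurable_neg).map_prod_eq_prod_map_map (hX i).aemeasurable (hX (i + 1)).neg.aemeasurable
    refine ae_eq_comp (f := cyclicPair X i) (measurable_cyclicPair hX i).aemeasurable ?_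
    rw [hlaw]
    exact (hS i).upperCore_ae_eq _ _
  calc μ (⋂ i, cyclicPair X i ⁻¹' S i)
      = μ (⋂ i, cyclicPair X i ⁻¹' M i) := measure_congr (Filter.EventuallyEq.iInter hae).symm
    _ ≤ ∏ i, μ (cyclicPair X i ⁻¹' M i) :=
        hindep.measure_iInter_cyclic_le hX (fun i => (hS i).measurableSet_upperCore _)
          fun i => (hS i).isUpperSet_upperCore _
    _ = ∏ i, μ (cyclicPair X i ⁻¹' S i) :=
        Finset.prod_congr rfl fun i _ => measure_congr (hae i)

end ProbabilityTheory.iIndepFun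

theorem cyclic_nuod_general {Ω : Type*} [MeasurableSpace Ω] (μ : Measure Ω)
    (K : ℕ) [NeZero K] (X : Fin K → Ω → ℝ)
    (hmeas : ∀ i, Measurable (X i))
    (hindep : ProbabilityTheory.iIndepFun (m := fun _ => Real.measurableSpace) X μ)
    (f : Fin K → ℝ → ℝ → ℝ)
    (hmono1 : ∀ i y, Monotone fun x => f i x y)
    (hmono2 : ∀ i x, Monotone fun y => f i x y)
    (Y : Fin K → Ω → ℝ) (hY : ∀ i ω, Y i ω = f i (X i ω) (-X (i + 1) ω)) :
    ∀ y : Fin K → ℝ,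
      μ (⋂ i, {ω | y i < Y i ω}) ≤ ∏ i, μ {ω | y i < Y i ω} := by
  intro y
  have hS : ∀ i, IsUpperSet {p : ℝ × ℝ | y i < f i p.1 p.2} := fun i p q hpq hp =>
    hp.trans_le ((hmono1 i p.2 hpq.1).trans (hmono2 i q.1 hpq.2))
  have hYS : ∀ i, {ω | y i < Y i ω} = cyclicPair X i ⁻¹' {p | y i < f i p.1 p.2} := fun i => by
    ext ω
    simp [cyclicPair, hY]
  simp only [hYS]
  rcases K with _ | _ | n
  · exact absurd rfl (NeZero.ne 0)
  · rw [Fin.prod_univ_one]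
    exact measure_mono (Set.iInter_subset _ 0)
  · exact hindep.measure_iInter_cyclic_le_of_isUpperSet hmeas hS

/-- For independent `X₁,…,X_K` (with `X_{K+1} = X₁`) and component-wise increasing
`fᵢ : ℝ² → ℝ`, the vector `Yᵢ = fᵢ(Xᵢ, −X_{i+1})` is negatively upper orthant dependent. -/
theorem cyclic_nuod {Ω : Type*} [MeasurableSpace Ω] (μ : Measure Ω)
    [IsProbabilityMeasure μ] (K : ℕ) [NeZero K] (X : Fin K → Ω → ℝ)
    (hmeas : ∀ i, Measurable (X i))
    (hindep : ProbabilityTheory.iIndepFun (m := fun _ => Real.measurableSpace) X μ)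
    (f : Fin K → ℝ → ℝ → ℝ)
    (hmono1 : ∀ i y, Monotone fun x => f i x y)
    (hmono2 : ∀ i x, Monotone fun y => f i x y)
    (Y : Fin K → Ω → ℝ) (hY : ∀ i ω, Y i ω = f i (X i ω) (-X (i + 1) ω)) :
    ∀ y : Fin K → ℝ,
      μ (⋂ i, {ω | y i < Y i ω}) ≤ ∏ i, μ {ω | y i < Y i ω} :=
  cyclic_nuod_general μ K X hmeas hindep f hmono1 hmono2 Y hY
end
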